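/- Let P be an invertible linear map on a finite-dimensional real vector space E = E_u ⊕ E_s preserving the splitting, such that all complex eigenvalues of P restricted to E_u have absolute value < 1 and all complex eigenvalues of P restricted to E_s have absolute value > 1. Then |det(I - P)| = (-1)^{dim E_s} · sgn(det(P|_{E_s})) · det(I - P). -/

import Mathlib

/-!
`det(1 - P) = det(1 - P_u) · det(1 - P_s)`. The function `t ↦ det(1 - t P_u)` has no zero on
`[0, 1]`, since a zero at `t` would make `1/t ≥ 1` an eigenvalue of `P_u`; so `det(1 - P_u)` has
the sign of its value `1` at `t = 0`. Likewise `t ↦ det(t - P_s)` has no zero on `[0, 1]`, so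
`det(1 - P_s)` has the sign of `det(-P_s) = (-1)^{dim E_s} det P_s`.
-/

open Matrix

theorem IsPreconnected.mul_pos_of_forall_ne_zero {X : Type*} [TopologicalSpace X] {s : Set X}
    (hs : IsPreconnected s) {f : X → ℝ} (hf : ContinuousOn f s) (hf₀ : ∀ x ∈ s, f x ≠ 0)
    {a b : X} (ha : a ∈ s) (hb : b ∈ s) : 0 < f a * f b := by
  by_contra! hab
  rcases mul_nonpos_iff.1 hab with ⟨hfa, hfb⟩ | ⟨hfa, hfb⟩
  · obtain ⟨x, hx, hfx⟩ := hs.intermediate_value hb ha hf ⟨hfb, hfa⟩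
    exact hf₀ x hx hfx
  · obtain ⟨x, hx, hfx⟩ := hs.intermediate_value ha hb hf ⟨hfa, hfb⟩
    exact hf₀ x hx hfx

theorem abs_eq_sign_mul_of_mul_pos {b c : ℝ} (h : 0 < c * b) : |b| = Real.sign c * b := by
  rcases mul_pos_iff.1 h with ⟨hc, hb⟩ | ⟨hc, hb⟩
  · rw [Real.sign_of_pos hc, abs_of_pos hb, one_mul]
  · rw [Real.sign_of_neg hc, abs_of_neg hb, neg_one_mul]

theorem Real.sign_neg_one_pow_mul (k : ℕ) (x : ℝ) :
    Real.sign ((-1) ^ k * x) = (-1) ^ k * Real.sign x := by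
  rcases neg_one_pow_eq_or ℝ k with h | h <;> simp [h, Real.sign_neg]

namespace Matrix

variable {n m R : Type*} [Fintype n] [DecidableEq n] [Fintype m] [DecidableEq m] [CommRing R]

theorem det_one_sub_fromBlocks_zero (A : Matrix n n R) (D : Matrix m m R) :
    (1 - fromBlocks A 0 0 D).det = (1 - A).det * (1 - D).det := by
  rw [← fromBlocks_one]
  simp only [sub_eq_add_neg, fromBlocks_neg, fromBlocks_add, neg_zero, add_zero]
  exact det_fromBlocks_zero₂₁ _ _ _

theorem det_smul_one_sub_ne_zero {M : Matrix n n ℝ} {t : ℝ}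
    (ht : (t : ℂ) ∉ spectrum ℂ (M.map (fun a : ℝ => (a : ℂ)))) : (t • 1 - M).det ≠ 0 := by
  rw [mem_spectrum_iff_isRoot_charpoly] at ht
  change ¬ (M.map Complex.ofRealHom).charpoly.IsRoot (Complex.ofRealHom t) at ht
  rwa [charpoly_map, Polynomial.isRoot_map_iff Complex.ofReal_injective, Polynomial.IsRoot.def,
    eval_charpoly, scalar_apply, ← smul_one_eq_diagonal] at ht

theorem det_one_sub_pos_of_spectrum_norm_lt_one {M : Matrix n n ℝ}
    (hM : ∀ μ ∈ spectrum ℂ (M.map (fun a : ℝ => (a : ℂ))), ‖μ‖ < 1) : 0 < (1 - M).det := by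
  have hne : ∀ t ∈ Set.Icc (0 : ℝ) 1, (1 - t • M).det ≠ 0 := by
    rintro t ⟨ht0, ht1⟩
    rcases ht0.eq_or_lt with rfl | ht0
    · simp
    have hinv : ((t⁻¹ : ℝ) : ℂ) ∉ spectrum ℂ (M.map (fun a : ℝ => (a : ℂ))) := fun h =>
      (hM _ h).not_ge <| by
        rw [Complex.norm_real, Real.norm_eq_abs, abs_of_pos (inv_pos.2 ht0)]
        exact one_le_inv₀ ht0 |>.2 ht1
    rw [show 1 - t • M = t • (t⁻¹ • 1 - M) by
      rw [smul_sub, smul_smul, mul_inv_cancel₀ ht0.ne', one_smul], det_smul]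
    exact mul_ne_zero (pow_ne_zero _ ht0.ne') (det_smul_one_sub_ne_zero hinv)
  simpa using isPreconnected_Icc.mul_pos_of_forall_ne_zero
    (f := fun t : ℝ => (1 - t • M).det) (by fun_prop) hne
    (Set.left_mem_Icc.2 zero_le_one) (Set.right_mem_Icc.2 zero_le_one)

theorem neg_one_pow_card_mul_det_mul_det_one_sub_pos {M : Matrix n n ℝ}
    (hM : ∀ μ ∈ spectrum ℂ (M.map (fun a : ℝ => (a : ℂ))), 1 < ‖μ‖) :
    0 < (-1) ^ Fintype.card n * M.det * (1 - M).det := by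
  have hne : ∀ t ∈ Set.Icc (0 : ℝ) 1, (t • 1 - M).det ≠ 0 := fun t ⟨ht0, ht1⟩ =>
    det_smul_one_sub_ne_zero fun h => (hM _ h).not_ge <| by
      rwa [Complex.norm_real, Real.norm_eq_abs, abs_of_nonneg ht0]
  simpa [det_neg] using isPreconnected_Icc.mul_pos_of_forall_ne_zero
    (f := fun t : ℝ => (t • (1 : Matrix n n ℝ) - M).det) (by fun_prop) hne
    (Set.left_mem_Icc.2 zero_le_one) (Set.right_mem_Icc.2 zero_le_one)

theorem abs_det_one_sub_of_spectrum_one_lt_norm {M : Matrix n n ℝ}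
    (hM : ∀ μ ∈ spectrum ℂ (M.map (fun a : ℝ => (a : ℂ))), 1 < ‖μ‖) :
    |(1 - M).det| = (-1) ^ Fintype.card n * Real.sign M.det * (1 - M).det := by
  rw [abs_eq_sign_mul_of_mul_pos (neg_one_pow_card_mul_det_mul_det_one_sub_pos hM),
    Real.sign_neg_one_pow_mul]

end Matrix

theorem abs_det_one_sub_eq_general (nu ns : ℕ)
    (Pu : Matrix (Fin nu) (Fin nu) ℝ) (Ps : Matrix (Fin ns) (Fin ns) ℝ)
    (hu : ∀ μ ∈ spectrum ℂ (Pu.map (fun a : ℝ => (a : ℂ))), ‖μ‖ < 1)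
    (hs : ∀ μ ∈ spectrum ℂ (Ps.map (fun a : ℝ => (a : ℂ))), 1 < ‖μ‖) :
    |(1 - Matrix.fromBlocks Pu 0 0 Ps).det| =
      (-1 : ℝ) ^ ns * Real.sign Ps.det * (1 - Matrix.fromBlocks Pu 0 0 Ps).det := by
  rw [det_one_sub_fromBlocks_zero, abs_mul, abs_of_pos (det_one_sub_pos_of_spectrum_norm_lt_one hu),
    abs_det_one_sub_of_spectrum_one_lt_norm hs, Fintype.card_fin]
  ring

/-- For an invertible linear map `P = diag(P_u, P_s)` on `E = E_u ⊕ E_s` whose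
eigenvalues on `E_u` have absolute value `< 1` and whose eigenvalues on `E_s` have
absolute value `> 1`, we have
`|det(I - P)| = (-1)^{dim E_s} ⬝ sgn(det P|_{E_s}) ⬝ det(I - P)`. -/
theorem abs_det_one_sub_eq (nu ns : ℕ)
    (Pu : Matrix (Fin nu) (Fin nu) ℝ) (Ps : Matrix (Fin ns) (Fin ns) ℝ)
    (hP : IsUnit (Matrix.fromBlocks Pu 0 0 Ps).det)
    (hu : ∀ μ ∈ spectrum ℂ (Pu.map (fun a : ℝ => (a : ℂ))), ‖μ‖ < 1)
    (hs : ∀ μ ∈ spectrum ℂ (Ps.map (fun a : ℝ => (a : ℂ))), 1 < ‖μ‖) :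
    |(1 - Matrix.fromBlocks Pu 0 0 Ps).det| =
      (-1 : ℝ) ^ ns * Real.sign Ps.det * (1 - Matrix.fromBlocks Pu 0 0 Ps).det :=
  abs_det_one_sub_eq_general nu ns Pu Ps hu hs
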